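/- arXiv:2102.12910 — 3 statements merged into one kernel-verified Lean document; each statement's English description precedes it below -/
import Mathlib

section
/- For every n ∈ ℕ there exists a constant C = C(n) > 0 such that the following holds. Let r > 0, ε ∈ (0,1), and let f : B_r^{ℝ^n}(0) → ℝ^d with d > n be an (εr)-isometry. Then there exists an isometry I : ℝ^n → ℝ^d such that I(0) = f(0) and |I(u) − f(u)| ≤ C·√ε·r for every u ∈ B_r^{ℝ^n}(0). -/
open Metric Set

noncomputable section

/-- Gromov–Hausdorff distance via metrics on the disjoint union. -/
def ghDist (X Y : Type) [MetricSpace X] [MetricSpace Y] : ℝ :=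
  sInf {r : ℝ | ∃ M : MetricSpace (X ⊕ Y),
    (∀ a b : X, @dist _ M.toPseudoMetricSpace.toDist (Sum.inl a) (Sum.inl b) = dist a b) ∧
    (∀ a b : Y, @dist _ M.toPseudoMetricSpace.toDist (Sum.inr a) (Sum.inr b) = dist a b) ∧
    @Metric.hausdorffDist _ M.toPseudoMetricSpace (Set.range Sum.inl) (Set.range Sum.inr) ≤ r}

def planeHD {d : ℕ} (S : Set (EuclideanSpace ℝ (Fin d)))
    (Γ : AffineSubspace ℝ (EuclideanSpace ℝ (Fin d)))
    (x : EuclideanSpace ℝ (Fin d)) (r : ℝ) : ℝ :=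
  r⁻¹ * Metric.hausdorffDist (S ∩ Metric.ball x r)
    ((Γ : Set (EuclideanSpace ℝ (Fin d))) ∩ Metric.ball x r)

def planeSup {d : ℕ} (S : Set (EuclideanSpace ℝ (Fin d)))
    (Γ : AffineSubspace ℝ (EuclideanSpace ℝ (Fin d)))
    (x : EuclideanSpace ℝ (Fin d)) (r : ℝ) : ℝ :=
  r⁻¹ * sSup ((fun y => Metric.infDist y (Γ : Set (EuclideanSpace ℝ (Fin d)))) ''
    (S ∩ Metric.ball x r))

def alphaNum (n : ℕ) {d : ℕ} (S : Set (EuclideanSpace ℝ (Fin d)))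
    (x : EuclideanSpace ℝ (Fin d)) (r : ℝ) : ℝ :=
  sInf {t : ℝ | ∃ Γ : AffineSubspace ℝ (EuclideanSpace ℝ (Fin d)),
    x ∈ Γ ∧ Module.finrank ℝ Γ.direction = n ∧ t = planeHD S Γ x r}

def betaNum (n : ℕ) {d : ℕ} (S : Set (EuclideanSpace ℝ (Fin d)))
    (x : EuclideanSpace ℝ (Fin d)) (r : ℝ) : ℝ :=
  sInf {t : ℝ | ∃ Γ : AffineSubspace ℝ (EuclideanSpace ℝ (Fin d)),
    x ∈ Γ ∧ Module.finrank ℝ Γ.direction = n ∧ t = planeSup S Γ x r}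

def aTilde (n : ℕ) {d : ℕ} (S : Set (EuclideanSpace ℝ (Fin d)))
    (x : EuclideanSpace ℝ (Fin d)) (r : ℝ) : ℝ :=
  r⁻¹ * ghDist (↥(S ∩ Metric.ball x r)) (↥(Metric.ball (0 : EuclideanSpace ℝ (Fin n)) r))

def bTilde (n : ℕ) {d : ℕ} (S : Set (EuclideanSpace ℝ (Fin d)))
    (x : EuclideanSpace ℝ (Fin d)) (r : ℝ) : ℝ :=
  r⁻¹ * sInf {δ : ℝ | 0 < δ ∧
    ∃ f : ↥(S ∩ Metric.ball x r) → ↥(Metric.ball (0 : EuclideanSpace ℝ (Fin n)) r),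
      ∀ a b, |dist (f a) (f b) - dist a b| < δ}

def alphaSeq (n : ℕ) {d : ℕ} (S : Set (EuclideanSpace ℝ (Fin d))) (i : ℤ) : ℝ :=
  sSup ((fun x => alphaNum n S x ((2 : ℝ) ^ (-i))) '' (S ∩ Metric.ball 0 1))

def betaSeq (n : ℕ) {d : ℕ} (S : Set (EuclideanSpace ℝ (Fin d))) (i : ℤ) : ℝ :=
  sSup ((fun x => betaNum n S x ((2 : ℝ) ^ (-i))) '' (S ∩ Metric.ball 0 1))

def aTildeSeq (n : ℕ) {d : ℕ} (S : Set (EuclideanSpace ℝ (Fin d))) (ε : ℝ) (i : ℤ) : ℝ :=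
  sSup ((fun x => aTilde n S x ((2 : ℝ) ^ (-i))) '' (S ∩ Metric.ball 0 (1 - ε)))

def bTildeSeq (n : ℕ) {d : ℕ} (S : Set (EuclideanSpace ℝ (Fin d))) (ε : ℝ) (i : ℤ) : ℝ :=
  sSup ((fun x => bTilde n S x ((2 : ℝ) ^ (-i))) '' (S ∩ Metric.ball 0 (1 - ε)))

def planeDist {d : ℕ} (Γ₁ Γ₂ : AffineSubspace ℝ (EuclideanSpace ℝ (Fin d))) : ℝ :=
  Metric.hausdorffDist
    ((Γ₁.direction : Set (EuclideanSpace ℝ (Fin d))) ∩ Metric.closedBall 0 1)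
    ((Γ₂.direction : Set (EuclideanSpace ℝ (Fin d))) ∩ Metric.closedBall 0 1)

def simplexVol (n : ℕ) {d : ℕ} (p : Fin (n + 1) → EuclideanSpace ℝ (Fin d)) : ℝ :=
  Real.sqrt (Matrix.det (Matrix.of fun i j : Fin n =>
    (inner ℝ (p i.succ - p 0) (p j.succ - p 0) : ℝ))) / (n.factorial : ℝ)

def IsRealizingPlane (n : ℕ) {d : ℕ} (C' : ℝ) (S : Set (EuclideanSpace ℝ (Fin d)))
    (Γ : AffineSubspace ℝ (EuclideanSpace ℝ (Fin d))) (x : EuclideanSpace ℝ (Fin d))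
    (r : ℝ) : Prop :=
  x ∈ Γ ∧ Module.finrank ℝ Γ.direction = n ∧ planeSup S Γ x r = betaNum n S x r ∧
    planeHD S Γ x r ≤ C' * alphaNum n S x r

/-! Translate `f` so that `f 0 = 0`. Polarization turns the `εr`-isometry bound into an
`O(εr²)` bound on the distortion of inner products. The images of the points `(r/2) eᵢ`,
rescaled by `2/r`, then form an `O(ε)`-almost orthonormal family, which a perturbed Gram–Schmidt
process moves by `O(ε)` to an orthonormal family `wᵢ`. For the linear isometry `T eᵢ = wᵢ`,
expanding `‖T v - f v‖²` shows that its main terms cancel, leaving `O(εr²)`; hence the `√ε`. -/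

open scoped RealInnerProductSpace
open Finset

section

variable {ι F : Type*} [Fintype ι] [NormedAddCommGroup F] [InnerProductSpace ℝ F]

noncomputable def Orthonormal.linearIsometry {w : ι → F} (hw : Orthonormal ℝ w) :
    EuclideanSpace ℝ ι →ₗᵢ[ℝ] F :=
  (Fintype.linearCombination ℝ w ∘ₗ (WithLp.linearEquiv 2 ℝ (ι → ℝ)).toLinearMap).isometryOfInner
    fun x y => by
      simp [Fintype.linearCombination_apply, hw.inner_sum, PiLp.inner_apply, mul_comm]

theorem Orthonormal.linearIsometry_apply {w : ι → F} (hw : Orthonormal ℝ w)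
    (v : EuclideanSpace ℝ ι) : hw.linearIsometry v = ∑ i, v i • w i := by
  simp [Orthonormal.linearIsometry, Fintype.linearCombination_apply]

theorem Orthonormal.norm_sum_smul_sub_sq {w : ι → F} (hw : Orthonormal ℝ w)
    (v : EuclideanSpace ℝ ι) (y : F) :
    ‖∑ i, v i • w i - y‖ ^ 2 = ‖y‖ ^ 2 - ‖v‖ ^ 2 - 2 * ∑ i, v i * (⟪w i, y⟫ - v i) := by
  rw [norm_sub_sq_real, ← hw.linearIsometry_apply, LinearIsometry.norm_map,
    hw.linearIsometry_apply, sum_inner, EuclideanSpace.norm_sq_eq]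
  simp only [real_inner_smul_left, Real.norm_eq_abs, sq_abs, mul_sub, sum_sub_distrib, ← sq]
  ring

theorem Orthonormal.norm_sum_smul_sub_sq_le {w : ι → F} (hw : Orthonormal ℝ w)
    {v : EuclideanSpace ℝ ι} {y : F} {R β γ : ℝ} (hv : ‖v‖ ≤ R) (hy : ‖y‖ ^ 2 - ‖v‖ ^ 2 ≤ γ)
    (hβ : ∀ i, |⟪w i, y⟫ - v i| ≤ β) :
    ‖∑ i, v i • w i - y‖ ^ 2 ≤ γ + 2 * (Fintype.card ι * (R * β)) := by
  have hsum : |∑ i, v i * (⟪w i, y⟫ - v i)| ≤ Fintype.card ι * (R * β) :=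
    calc |∑ i, v i * (⟪w i, y⟫ - v i)| ≤ ∑ i, |v i| * |⟪w i, y⟫ - v i| := by
          simpa only [abs_mul] using abs_sum_le_sum_abs (fun i => v i * (⟪w i, y⟫ - v i)) univ
      _ ≤ ∑ _i : ι, R * β := sum_le_sum fun i _ =>
          mul_le_mul ((PiLp.norm_apply_le v i).trans hv) (hβ i) (abs_nonneg _)
            ((norm_nonneg v).trans hv)
      _ = Fintype.card ι * (R * β) := by simp
  rw [hw.norm_sum_smul_sub_sq]
  linarith [(abs_le.mp hsum).1]

theorem Orthonormal.exists_unit_orthogonal_near {w : ι → F} (hw : Orthonormal ℝ w) {u : F}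
    {κ η : ℝ} (hκ : ∀ i, |⟪w i, u⟫| ≤ κ) (hu : |‖u‖ - 1| ≤ η)
    (hsmall : Fintype.card ι * κ + η < 1) :
    ∃ e : F, ‖e‖ = 1 ∧ (∀ i, ⟪w i, e⟫ = 0) ∧ ‖e - u‖ ≤ 2 * (Fintype.card ι * κ) + η := by
  set x := u - ∑ i, ⟪w i, u⟫ • w i
  have hx_orth : ∀ i, ⟪w i, x⟫ = 0 := fun i => by
    rw [inner_sub_right, hw.inner_right_fintype, sub_self]
  have hxu : ‖x - u‖ ≤ Fintype.card ι * κ := by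
    calc ‖x - u‖ = ‖∑ i, ⟪w i, u⟫ • w i‖ := by rw [sub_sub_cancel_left, norm_neg]
      _ ≤ ∑ i, ‖⟪w i, u⟫ • w i‖ := norm_sum_le _ _
      _ ≤ ∑ _i : ι, κ := sum_le_sum fun i _ => by
          rw [norm_smul, hw.1 i, mul_one, Real.norm_eq_abs]; exact hκ i
      _ = Fintype.card ι * κ := by simp
  have hx1 : |‖x‖ - 1| ≤ Fintype.card ι * κ + η := by
    calc |‖x‖ - 1| ≤ |‖x‖ - ‖u‖| + |‖u‖ - 1| := abs_sub_le _ _ _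
      _ ≤ Fintype.card ι * κ + η := add_le_add ((abs_norm_sub_norm_le x u).trans hxu) hu
  have hx0 : ‖x‖ ≠ 0 := by
    intro h; rw [h, zero_sub, abs_neg, abs_one] at hx1; linarith
  refine ⟨‖x‖⁻¹ • x, ?_, fun i => by rw [real_inner_smul_right, hx_orth, mul_zero], ?_⟩
  · rw [norm_smul, norm_inv, norm_norm, inv_mul_cancel₀ hx0]
  · have hex : ‖‖x‖⁻¹ • x - x‖ = |‖x‖ - 1| := by
      rw [show ‖x‖⁻¹ • x - x = (‖x‖⁻¹ - 1) • x by rw [sub_smul, one_smul], norm_smul,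
        Real.norm_eq_abs, ← abs_norm x, ← abs_mul, abs_norm, sub_mul, inv_mul_cancel₀ hx0,
        one_mul, abs_sub_comm]
    calc ‖‖x‖⁻¹ • x - u‖ ≤ ‖‖x‖⁻¹ • x - x‖ + ‖x - u‖ := norm_sub_le_norm_sub_add_norm_sub _ _ _
      _ ≤ 2 * (Fintype.card ι * κ) + η := by rw [hex]; linarith

end

theorem Orthonormal.snoc {F : Type*} [NormedAddCommGroup F] [InnerProductSpace ℝ F] {n : ℕ}
    {w : Fin n → F} (hw : Orthonormal ℝ w) {e : F} (he : ‖e‖ = 1) (horth : ∀ i, ⟪w i, e⟫ = 0) :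
    Orthonormal ℝ (Fin.snoc w e : Fin (n + 1) → F) := by
  have horth' : ∀ i, ⟪e, w i⟫ = 0 := fun i => by rw [real_inner_comm, horth]
  rw [orthonormal_iff_ite]
  intro i j
  induction i using Fin.lastCases <;> induction j using Fin.lastCases <;>
    simp [he, horth, horth', orthonormal_iff_ite.mp hw, Fin.castSucc_lt_last, ne_of_gt, ne_of_lt]

noncomputable def orthonormalizeConst : ℕ → ℝ
  | 0 => 1
  | n + 1 => (6 * n + 1) * orthonormalizeConst n + 2

theorem one_le_orthonormalizeConst : ∀ n, 1 ≤ orthonormalizeConst n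
  | 0 => le_rfl
  | n + 1 => by
    have := one_le_orthonormalizeConst n
    simp only [orthonormalizeConst]
    nlinarith [(n.cast_nonneg : (0 : ℝ) ≤ n)]

theorem abs_sub_one_le_abs_sq_sub_one {s : ℝ} (hs : 0 ≤ s) : |s - 1| ≤ |s ^ 2 - 1| := by
  rw [show s ^ 2 - 1 = (s - 1) * (s + 1) by ring, abs_mul]
  exact le_mul_of_one_le_right (abs_nonneg _) (by rw [abs_of_pos (by linarith)]; linarith)

theorem exists_orthonormal_near {F : Type*} [NormedAddCommGroup F] [InnerProductSpace ℝ F] :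
    ∀ {n : ℕ} (u : Fin n → F) {η : ℝ}, 0 ≤ η → orthonormalizeConst n * η ≤ 1 →
      (∀ i j, |⟪u i, u j⟫ - if i = j then 1 else 0| ≤ η) →
      ∃ w : Fin n → F, Orthonormal ℝ w ∧ ∀ i, ‖w i - u i‖ ≤ orthonormalizeConst n * η
  | 0, _, _, _, _, _ => ⟨Fin.elim0, Orthonormal.of_isEmpty _, fun i => i.elim0⟩
  | n + 1, u, η, hη, hsmall, hu => by
    set c := orthonormalizeConst n
    have hc : 1 ≤ c := one_le_orthonormalizeConst n
    have hn : (0 : ℝ) ≤ n := n.cast_nonneg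
    have hc' : orthonormalizeConst (n + 1) = (6 * n + 1) * c + 2 := rfl
    rw [hc'] at hsmall ⊢
    have hcη : c * η ≤ 1 := by nlinarith
    obtain ⟨w, hw, hwu⟩ : ∃ w : Fin n → F, Orthonormal ℝ w ∧ ∀ i, ‖w i - u i.castSucc‖ ≤ c * η :=
      exists_orthonormal_near (fun i => u i.castSucc) hη hcη
      fun i j => by simpa using hu i.castSucc j.castSucc
    set y := u (Fin.last n)
    have hy : |‖y‖ - 1| ≤ η := by
      have := hu (Fin.last n) (Fin.last n)
      rw [if_pos rfl, real_inner_self_eq_norm_sq] at this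
      exact (abs_sub_one_le_abs_sq_sub_one (norm_nonneg y)).trans this
    have hy2 : ‖y‖ ≤ 2 := by nlinarith [(abs_le.mp hy).2]
    have hwy : ∀ i, |⟪w i, y⟫| ≤ 3 * c * η := fun i => by
      have huy : |⟪u i.castSucc, y⟫| ≤ η := by
        simpa [(Fin.castSucc_lt_last i).ne] using hu i.castSucc (Fin.last n)
      have hwuy : |⟪w i - u i.castSucc, y⟫| ≤ 2 * (c * η) :=
        (abs_real_inner_le_norm _ _).trans (by nlinarith [hwu i, norm_nonneg (w i - u i.castSucc)])
      calc |⟪w i, y⟫| = |⟪u i.castSucc, y⟫ + ⟪w i - u i.castSucc, y⟫| := by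
            rw [inner_sub_left, add_sub_cancel]
        _ ≤ |⟪u i.castSucc, y⟫| + |⟪w i - u i.castSucc, y⟫| := abs_add_le _ _
        _ ≤ 3 * c * η := by nlinarith
    obtain ⟨e, he, horth, hey⟩ := hw.exists_unit_orthogonal_near hwy hy
      (by rw [Fintype.card_fin]; nlinarith)
    rw [Fintype.card_fin] at hey
    refine ⟨Fin.snoc w e, hw.snoc he horth, fun i => ?_⟩
    induction i using Fin.lastCases with
    | last => rw [Fin.snoc_last]; nlinarith
    | cast i =>
      rw [Fin.snoc_castSucc]
      nlinarith [hwu i, mul_nonneg (mul_nonneg hn (by linarith : (0 : ℝ) ≤ c)) hη]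

theorem abs_sq_sub_sq_le {s t δ R : ℝ} (hs : 0 ≤ s) (ht : 0 ≤ t) (htR : t ≤ R) (hδR : δ ≤ R)
    (hst : |s - t| ≤ δ) : |s ^ 2 - t ^ 2| ≤ 3 * R * δ := by
  rw [show s ^ 2 - t ^ 2 = (s - t) * (s + t) by ring, abs_mul, abs_of_nonneg (add_nonneg hs ht)]
  have hs' : s ≤ t + δ := by linarith [(abs_le.mp hst).2]
  calc |s - t| * (s + t) ≤ δ * (s + t) := by gcongr
    _ ≤ δ * (3 * R) := by gcongr; exact (abs_nonneg _).trans hst; linarith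
    _ = 3 * R * δ := by ring

section

variable {E F : Type*} [NormedAddCommGroup E] [InnerProductSpace ℝ E]
  [NormedAddCommGroup F] [InnerProductSpace ℝ F]

theorem abs_inner_sub_inner_le_of_abs_dist_sub_dist_le {g : E → F} {r δ : ℝ} (hg0 : g 0 = 0)
    (hδr : δ ≤ r)
    (hg : ∀ a ∈ ball (0 : E) r, ∀ b ∈ ball (0 : E) r, |dist (g a) (g b) - dist a b| ≤ δ)
    {a b : E} (ha : a ∈ ball 0 r) (hb : b ∈ ball 0 r) :
    |⟪g a, g b⟫ - ⟪a, b⟫| ≤ 6 * r * δ := by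
  have h0 : (0 : E) ∈ ball 0 r := mem_ball_self (pos_of_mem_ball ha)
  have hnorm : ∀ x ∈ ball (0 : E) r, |‖g x‖ ^ 2 - ‖x‖ ^ 2| ≤ 3 * r * δ := fun x hx => by
    have := hg x hx 0 h0
    rw [hg0, dist_zero_right, dist_zero_right] at this
    exact abs_sq_sub_sq_le (norm_nonneg _) (norm_nonneg _) (mem_ball_zero_iff.mp hx).le hδr this
  have hsub : |‖g a - g b‖ ^ 2 - ‖a - b‖ ^ 2| ≤ 3 * (2 * r) * δ := by
    have := hg a ha b hb
    rw [dist_eq_norm, dist_eq_norm] at this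
    refine abs_sq_sub_sq_le (norm_nonneg _) (norm_nonneg _) ?_
      (by linarith [pos_of_mem_ball ha]) this
    linarith [norm_sub_le a b, mem_ball_zero_iff.mp ha, mem_ball_zero_iff.mp hb]
  have hpol : ⟪g a, g b⟫ - ⟪a, b⟫ =
      ((‖g a‖ ^ 2 - ‖a‖ ^ 2) + (‖g b‖ ^ 2 - ‖b‖ ^ 2) - (‖g a - g b‖ ^ 2 - ‖a - b‖ ^ 2)) / 2 := by
    rw [norm_sub_sq_real, norm_sub_sq_real]; ring
  rw [hpol, abs_div, abs_two]
  have := abs_sub (‖g a‖ ^ 2 - ‖a‖ ^ 2 + (‖g b‖ ^ 2 - ‖b‖ ^ 2)) (‖g a - g b‖ ^ 2 - ‖a - b‖ ^ 2)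
  have := abs_add_le (‖g a‖ ^ 2 - ‖a‖ ^ 2) (‖g b‖ ^ 2 - ‖b‖ ^ 2)
  linarith [hnorm a ha, hnorm b hb]

end

theorem abs_inner_smul_map_single_sub_le {ι F : Type*} [Fintype ι] [DecidableEq ι]
    [NormedAddCommGroup F] [InnerProductSpace ℝ F] {g : EuclideanSpace ℝ ι → F} {r κ : ℝ}
    (hr : 0 < r)
    (hg : ∀ a ∈ ball (0 : EuclideanSpace ℝ ι) r, ∀ b ∈ ball (0 : EuclideanSpace ℝ ι) r,
      |⟪g a, g b⟫ - ⟪a, b⟫| ≤ κ)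
    (i : ι) {v : EuclideanSpace ℝ ι} (hv : v ∈ ball 0 r) :
    |⟪(2 / r) • g ((r / 2) • EuclideanSpace.single i 1), g v⟫ - v i| ≤ 2 / r * κ := by
  set p : EuclideanSpace ℝ ι := (r / 2) • EuclideanSpace.single i 1
  have hp : p ∈ ball 0 r := by simp [p, norm_smul, abs_of_pos hr, hr]
  have hpv : ⟪p, v⟫ = r / 2 * v i := by
    simp [p, real_inner_smul_left, EuclideanSpace.inner_single_left]
  have : ⟪(2 / r) • g p, g v⟫ - v i = 2 / r * (⟪g p, g v⟫ - ⟪p, v⟫) := by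
    rw [real_inner_smul_left, hpv]; field_simp
  rw [this, abs_mul, abs_of_pos (by positivity)]
  gcongr
  exact hg p hp v hv

theorem exists_linearIsometry_norm_sub_sq_le {F : Type*} [NormedAddCommGroup F]
    [InnerProductSpace ℝ F] {n : ℕ} {g : EuclideanSpace ℝ (Fin n) → F} {r ε : ℝ} (hr : 0 < r)
    (hε : 0 ≤ ε) (hsmall : 24 * orthonormalizeConst n * ε ≤ 1) (hg0 : g 0 = 0)
    (hg : ∀ a ∈ ball (0 : EuclideanSpace ℝ (Fin n)) r,
      ∀ b ∈ ball (0 : EuclideanSpace ℝ (Fin n)) r, |dist (g a) (g b) - dist a b| ≤ ε * r) :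
    ∃ T : EuclideanSpace ℝ (Fin n) →ₗᵢ[ℝ] F, ∀ v ∈ ball (0 : EuclideanSpace ℝ (Fin n)) r,
      ‖T v - g v‖ ^ 2 ≤ (6 + n * (24 + 96 * orthonormalizeConst n)) * ε * r ^ 2 := by
  set c := orthonormalizeConst n
  have hc : 1 ≤ c := one_le_orthonormalizeConst n
  have hεr : ε * r ≤ r := by nlinarith
  have hinner : ∀ a ∈ ball (0 : EuclideanSpace ℝ (Fin n)) r,
      ∀ b ∈ ball (0 : EuclideanSpace ℝ (Fin n)) r, |⟪g a, g b⟫ - ⟪a, b⟫| ≤ 6 * ε * r ^ 2 :=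
    fun a ha b hb => by
      have := abs_inner_sub_inner_le_of_abs_dist_sub_dist_le hg0 hεr hg ha hb
      linarith
  set u : Fin n → F := fun i => (2 / r) • g ((r / 2) • EuclideanSpace.single i 1)
  have hu : ∀ i, ∀ v ∈ ball (0 : EuclideanSpace ℝ (Fin n)) r, |⟪u i, g v⟫ - v i| ≤ 12 * ε * r :=
    fun i v hv => (abs_inner_smul_map_single_sub_le hr hinner i hv).trans_eq (by field_simp; ring)
  have hgram : ∀ i j, |⟪u i, u j⟫ - if i = j then 1 else 0| ≤ 24 * ε := fun i j => by
    set p : EuclideanSpace ℝ (Fin n) := (r / 2) • EuclideanSpace.single j 1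
    have hp : p ∈ ball 0 r := by simp [p, norm_smul, abs_of_pos hr, hr]
    have hpi : p i = r / 2 * if i = j then 1 else 0 := by simp [p]
    have : ⟪u i, u j⟫ - (if i = j then 1 else 0) = 2 / r * (⟪u i, g p⟫ - p i) := by
      rw [show u j = (2 / r) • g p from rfl, real_inner_smul_right, hpi]; field_simp
    rw [this, abs_mul, abs_of_pos (by positivity)]
    calc 2 / r * |⟪u i, g p⟫ - p i| ≤ 2 / r * (12 * ε * r) := by gcongr; exact hu i p hp
      _ = 24 * ε := by field_simp; ring
  obtain ⟨w, hw, hwu⟩ := exists_orthonormal_near u (by positivity) (by linarith) hgram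
  refine ⟨hw.linearIsometry, fun v hv => ?_⟩
  have hvr : ‖v‖ < r := mem_ball_zero_iff.mp hv
  have hgv : ‖g v‖ ^ 2 - ‖v‖ ^ 2 ≤ 6 * ε * r ^ 2 := by
    have := hinner v hv v hv
    rw [real_inner_self_eq_norm_sq, real_inner_self_eq_norm_sq] at this
    exact (abs_le.mp this).2
  have hgvr : ‖g v‖ ≤ 2 * r := by
    have := hg v hv 0 (mem_ball_self hr)
    rw [hg0, dist_zero_right, dist_zero_right] at this
    linarith [(abs_le.mp this).2]
  have hcoord : ∀ i, |⟪w i, g v⟫ - v i| ≤ (12 + 48 * c) * ε * r := fun i => by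
    have hwi : |⟪w i - u i, g v⟫| ≤ c * (24 * ε) * (2 * r) :=
      (abs_real_inner_le_norm _ _).trans (mul_le_mul (hwu i) hgvr (norm_nonneg _) (by positivity))
    rw [show ⟪w i, g v⟫ - v i = (⟪u i, g v⟫ - v i) + ⟪w i - u i, g v⟫ by
      rw [inner_sub_left]; ring]
    linarith [abs_add_le (⟪u i, g v⟫ - v i) ⟪w i - u i, g v⟫, hu i v hv]
  rw [hw.linearIsometry_apply]
  refine (hw.norm_sum_smul_sub_sq_le hvr.le hgv hcoord).trans_eq ?_
  rw [Fintype.card_fin]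
  ring

noncomputable def isometryApproxConst (n : ℕ) : ℝ :=
  √(6 + n * (24 + 96 * orthonormalizeConst n)) + 3 * √(24 * orthonormalizeConst n)

theorem isometryApproxConst_pos (n : ℕ) : 0 < isometryApproxConst n := by
  have := one_le_orthonormalizeConst n
  exact add_pos_of_nonneg_of_pos (Real.sqrt_nonneg _)
    (mul_pos three_pos (Real.sqrt_pos.mpr (by linarith)))

theorem exists_linearIsometry_norm_sub_le {n d : ℕ} (hnd : n ≤ d)
    {g : EuclideanSpace ℝ (Fin n) → EuclideanSpace ℝ (Fin d)} {r ε : ℝ} (hr : 0 < r)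
    (hε : 0 ≤ ε) (hε1 : ε ≤ 1) (hg0 : g 0 = 0)
    (hg : ∀ a ∈ ball (0 : EuclideanSpace ℝ (Fin n)) r,
      ∀ b ∈ ball (0 : EuclideanSpace ℝ (Fin n)) r, |dist (g a) (g b) - dist a b| ≤ ε * r) :
    ∃ T : EuclideanSpace ℝ (Fin n) →ₗᵢ[ℝ] EuclideanSpace ℝ (Fin d),
      ∀ v ∈ ball (0 : EuclideanSpace ℝ (Fin n)) r,
        ‖T v - g v‖ ≤ isometryApproxConst n * √ε * r := by
  set c := orthonormalizeConst n
  set K : ℝ := 6 + n * (24 + 96 * c)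
  have hc : 1 ≤ c := one_le_orthonormalizeConst n
  have hC : isometryApproxConst n = √K + 3 * √(24 * c) := rfl
  rcases le_or_gt (24 * c * ε) 1 with hsmall | hlarge
  · obtain ⟨T, hT⟩ := exists_linearIsometry_norm_sub_sq_le hr hε hsmall hg0 hg
    refine ⟨T, fun v hv => ?_⟩
    calc ‖T v - g v‖ ≤ √(K * ε * r ^ 2) := Real.le_sqrt_of_sq_le (hT v hv)
      _ = √K * √ε * r := by
          rw [Real.sqrt_mul (by positivity), Real.sqrt_mul (by positivity), Real.sqrt_sq hr.le]
      _ ≤ isometryApproxConst n * √ε * r := by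
          rw [hC]; gcongr; linarith [Real.sqrt_nonneg (24 * c)]
  -- for large `ε` any linear isometry will do, as both it and `g` map the ball into `ball 0 (2r)`
  have hdim := (EuclideanSpace.basisFun (Fin d) ℝ).orthonormal.comp _ (Fin.castLE_injective hnd)
  refine ⟨hdim.linearIsometry, fun v hv => ?_⟩
  have hvr : ‖v‖ < r := mem_ball_zero_iff.mp hv
  have hgvr : ‖g v‖ ≤ ‖v‖ + ε * r := by
    have := hg v hv 0 (mem_ball_self hr)
    rw [hg0, dist_zero_right, dist_zero_right] at this
    linarith [(abs_le.mp this).2]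
  have hε' : 1 ≤ √(24 * c) * √ε := by
    rw [← Real.sqrt_mul (by positivity)]; exact Real.one_le_sqrt.mpr hlarge.le
  calc ‖hdim.linearIsometry v - g v‖ ≤ ‖v‖ + ‖g v‖ := by
        simpa only [LinearIsometry.norm_map] using norm_sub_le (hdim.linearIsometry v) (g v)
    _ ≤ 3 * r := by nlinarith
    _ ≤ 3 * (√(24 * c) * √ε) * r := by nlinarith
    _ ≤ isometryApproxConst n * √ε * r := by
        rw [hC]
        nlinarith [mul_nonneg (mul_nonneg (Real.sqrt_nonneg K) (Real.sqrt_nonneg ε)) hr.le]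

theorem stmt7 (n : ℕ) :
    ∃ C : ℝ, 0 < C ∧
      ∀ (d : ℕ) (r ε : ℝ)
        (f : EuclideanSpace ℝ (Fin n) → EuclideanSpace ℝ (Fin d)),
        n < d → 0 < r → ε ∈ Set.Ioo (0 : ℝ) 1 →
        (∀ a ∈ Metric.ball (0 : EuclideanSpace ℝ (Fin n)) r,
          ∀ b ∈ Metric.ball (0 : EuclideanSpace ℝ (Fin n)) r,
            |dist (f a) (f b) - dist a b| < ε * r) →
        ∃ I : EuclideanSpace ℝ (Fin n) → EuclideanSpace ℝ (Fin d),
          Isometry I ∧ I 0 = f 0 ∧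
            ∀ u ∈ Metric.ball (0 : EuclideanSpace ℝ (Fin n)) r,
              ‖I u - f u‖ ≤ C * Real.sqrt ε * r := by
  refine ⟨isometryApproxConst n, isometryApproxConst_pos n,
    fun d r ε f hd hr ⟨hε0, hε1⟩ hf => ?_⟩
  obtain ⟨T, hT⟩ := exists_linearIsometry_norm_sub_le hd.le hr hε0.le hε1.le
    (g := fun a => f a - f 0) (sub_self _)
    fun a ha b hb => by simpa only [dist_sub_right] using (hf a ha b hb).le
  refine ⟨fun v => f 0 + T v, (isometry_add_left (f 0)).comp T.isometry, by simp, fun v hv => ?_⟩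
  rw [show f 0 + T v - f v = T v - (f v - f 0) by abel]
  exact hT v hv

end
end

section
/- Let Γ₁, Γ₂ be two n-dimensional affine planes in ℝ^d. Then for any x ∈ Γ₁ and any y ∈ ℝ^d with y ≠ x, one has |x − y|² ≤ |Π(x) − Π(y)|² + |x − y|² · ( d(Γ₁, Γ₂) + dist(y, Γ₁)/|x − y| )², where Π denotes the orthogonal projection onto Γ₂ and dist(y, Γ₁) is the distance from y to Γ₁. -/
open Metric Set

noncomputable section

/-!
Write `x - y = (Π x - Π y) + r` with `r` orthogonal to `Γ₂`, so that
`‖x - y‖² = ‖Π x - Π y‖² + ‖r‖²`. Let `y'` be the projection of `y` onto `Γ₁`. The component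
orthogonal to `Γ₂` of a vector `v` parallel to `Γ₁` has length at most `d(Γ₁, Γ₂) ‖v‖`
(compare `v / ‖v‖` with the nearest point of the unit ball of `Γ̃₂`); applied to `v = x - y'`,
with `‖x - y'‖ ≤ ‖x - y‖` and `‖y' - y‖ = dist(y, Γ₁)`, this gives
`‖r‖ ≤ d(Γ₁, Γ₂) ‖x - y‖ + dist(y, Γ₁)`.
-/

section

variable {E : Type*} [NormedAddCommGroup E] [InnerProductSpace ℝ E]

theorem Submodule.norm_sub_starProjection_le_infDist (K : Submodule ℝ E)
    [K.HasOrthogonalProjection] (v : E) {s : Set E} (hsK : s ⊆ K) (hs : s.Nonempty) :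
    ‖v - K.starProjection v‖ ≤ infDist v s :=
  (le_infDist hs).2 fun w hw => by
    rw [dist_eq_norm, K.starProjection_minimal]
    exact ciInf_le ⟨0, forall_mem_range.2 fun _ => norm_nonneg _⟩ (⟨w, hsK hw⟩ : K)

theorem Submodule.norm_starProjection_orthogonal_le_hausdorffDist_mul (U K : Submodule ℝ E)
    [K.HasOrthogonalProjection] {v : E} (hv : v ∈ U) :
    ‖Kᗮ.starProjection v‖ ≤
      hausdorffDist ((U : Set E) ∩ closedBall 0 1) ((K : Set E) ∩ closedBall 0 1) * ‖v‖ := by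
  rcases eq_or_ne v 0 with rfl | hv0
  · simp
  have hvpos : 0 < ‖v‖ := norm_pos_iff.2 hv0
  set u := ‖v‖⁻¹ • v
  have hu : u ∈ (U : Set E) ∩ closedBall 0 1 :=
    ⟨U.smul_mem _ hv, by simp [u, norm_smul, hvpos.ne']⟩
  have hK : ((K : Set E) ∩ closedBall 0 1).Nonempty := ⟨0, K.zero_mem, by simp⟩
  have hfin : hausdorffEDist ((U : Set E) ∩ closedBall 0 1)
      ((K : Set E) ∩ closedBall 0 1) ≠ ⊤ :=
    hausdorffEDist_ne_top_of_nonempty_of_bounded ⟨u, hu⟩ hK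
      (isBounded_closedBall.subset inter_subset_right)
      (isBounded_closedBall.subset inter_subset_right)
  have hunit : ‖u - K.starProjection u‖ ≤
      hausdorffDist ((U : Set E) ∩ closedBall 0 1) ((K : Set E) ∩ closedBall 0 1) :=
    (K.norm_sub_starProjection_le_infDist u inter_subset_left hK).trans
      (infDist_le_hausdorffDist_of_mem hu hfin)
  rw [K.starProjection_orthogonal_val, mul_comm, ← inv_mul_le_iff₀ hvpos]
  simpa [u, ← smul_sub, norm_smul, hvpos.le] using hunit

namespace EuclideanGeometry

theorem norm_sub_sq_eq_norm_orthogonalProjection_sub_sq_add (t : AffineSubspace ℝ E) [Nonempty t]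
    [t.direction.HasOrthogonalProjection] (x y : E) :
    ‖x - y‖ ^ 2 = ‖(orthogonalProjection t x : E) - orthogonalProjection t y‖ ^ 2 +
      ‖t.directionᗮ.starProjection (x - y)‖ ^ 2 := by
  have hlin : (orthogonalProjection t x : E) - orthogonalProjection t y =
      t.direction.starProjection (x - y) :=
    congrArg Subtype.val ((orthogonalProjection t).linearMap_vsub x y).symm
  rw [hlin]
  exact Submodule.norm_sq_eq_add_norm_sq_starProjection _ _

theorem norm_starProjection_orthogonal_sub_le {s t : AffineSubspace ℝ E} [Nonempty s]
    [s.direction.HasOrthogonalProjection] [t.direction.HasOrthogonalProjection]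
    {x : E} (hx : x ∈ s) (y : E) :
    ‖t.directionᗮ.starProjection (x - y)‖ ≤
      hausdorffDist ((s.direction : Set E) ∩ closedBall 0 1)
        ((t.direction : Set E) ∩ closedBall 0 1) * ‖x - y‖ + infDist y s := by
  set y' : E := (orthogonalProjection s y : E)
  have hxy' : ‖x - y'‖ ≤ ‖x - y‖ := by
    have := dist_sq_eq_dist_orthogonalProjection_sq_add_dist_orthogonalProjection_sq y hx
    rw [← dist_eq_norm, ← dist_eq_norm]
    nlinarith [dist_nonneg (x := x) (y := y'), dist_nonneg (x := x) (y := y),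
      mul_self_nonneg (dist y y')]
  have hy' : ‖y' - y‖ = infDist y s := by
    rw [← dist_eq_norm, dist_comm]
    exact dist_orthogonalProjection_eq_infDist s y
  have hparallel : x - y' ∈ s.direction :=
    AffineSubspace.vsub_mem_direction hx (orthogonalProjection_mem y)
  calc ‖t.directionᗮ.starProjection (x - y)‖
      = ‖t.directionᗮ.starProjection (x - y') + t.directionᗮ.starProjection (y' - y)‖ := by
        rw [← map_add, sub_add_sub_cancel]
    _ ≤ hausdorffDist ((s.direction : Set E) ∩ closedBall 0 1)
          ((t.direction : Set E) ∩ closedBall 0 1) * ‖x - y'‖ + ‖y' - y‖ :=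
        (norm_add_le _ _).trans <| add_le_add
          (s.direction.norm_starProjection_orthogonal_le_hausdorffDist_mul _ hparallel)
          (Submodule.norm_starProjection_apply_le _ _)
    _ ≤ _ := by
        rw [hy']
        gcongr
        exact hausdorffDist_nonneg

end EuclideanGeometry

end

theorem stmt9_general (d : ℕ)
    (Γ₁ Γ₂ : AffineSubspace ℝ (EuclideanSpace ℝ (Fin d))) [Nonempty ↥Γ₂]
    (x : EuclideanSpace ℝ (Fin d)) (hx : x ∈ Γ₁)
    (y : EuclideanSpace ℝ (Fin d)) :
    ‖x - y‖ ^ 2 ≤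
      ‖((EuclideanGeometry.orthogonalProjection Γ₂ x : EuclideanSpace ℝ (Fin d)) -
          (EuclideanGeometry.orthogonalProjection Γ₂ y : EuclideanSpace ℝ (Fin d)))‖ ^ 2 +
        ‖x - y‖ ^ 2 *
          (planeDist Γ₁ Γ₂ +
            Metric.infDist y (Γ₁ : Set (EuclideanSpace ℝ (Fin d))) / ‖x - y‖) ^ 2 := by
  have : Nonempty Γ₁ := ⟨⟨x, hx⟩⟩
  rcases eq_or_ne y x with rfl | hxy
  · simp
  have hxy₀ : ‖x - y‖ ≠ 0 := norm_ne_zero_iff.2 (sub_ne_zero.2 hxy.symm)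
  calc ‖x - y‖ ^ 2
      = ‖(EuclideanGeometry.orthogonalProjection Γ₂ x : EuclideanSpace ℝ (Fin d)) -
          EuclideanGeometry.orthogonalProjection Γ₂ y‖ ^ 2 +
        ‖Γ₂.directionᗮ.starProjection (x - y)‖ ^ 2 :=
        EuclideanGeometry.norm_sub_sq_eq_norm_orthogonalProjection_sub_sq_add Γ₂ x y
    _ ≤ ‖(EuclideanGeometry.orthogonalProjection Γ₂ x : EuclideanSpace ℝ (Fin d)) -
          EuclideanGeometry.orthogonalProjection Γ₂ y‖ ^ 2 +
        (planeDist Γ₁ Γ₂ * ‖x - y‖ + infDist y Γ₁) ^ 2 := by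
        gcongr
        exact EuclideanGeometry.norm_starProjection_orthogonal_sub_le hx y
    _ = _ := by
        field_simp

theorem stmt9 (n d : ℕ) (hnd : n < d)
    (Γ₁ Γ₂ : AffineSubspace ℝ (EuclideanSpace ℝ (Fin d))) [Nonempty ↥Γ₂]
    (h₁ : Module.finrank ℝ Γ₁.direction = n)
    (h₂ : Module.finrank ℝ Γ₂.direction = n)
    (x : EuclideanSpace ℝ (Fin d)) (hx : x ∈ Γ₁)
    (y : EuclideanSpace ℝ (Fin d)) (hxy : y ≠ x) :
    ‖x - y‖ ^ 2 ≤
      ‖((EuclideanGeometry.orthogonalProjection Γ₂ x : EuclideanSpace ℝ (Fin d)) -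
          (EuclideanGeometry.orthogonalProjection Γ₂ y : EuclideanSpace ℝ (Fin d)))‖ ^ 2 +
        ‖x - y‖ ^ 2 *
          (planeDist Γ₁ Γ₂ +
            Metric.infDist y (Γ₁ : Set (EuclideanSpace ℝ (Fin d))) / ‖x - y‖) ^ 2 :=
  stmt9_general d Γ₁ Γ₂ x hx y
end
end

section
/- For every n ∈ ℕ there exists a constant C = C(n) ≥ 1 such that the following holds. Let S ⊂ ℝ^d with d > n, let x ∈ S and r > 0 be such that α(x,r) ≤ 1/100. Then there exists an n-dimensional affine plane Γ containing x that realizes β(x,r) (i.e. r^{-1} sup_{y ∈ S ∩ B_r(x)} dist(y, Γ) = β(x,r)) and that moreover satisfies r^{-1} d_H(S ∩ B_r(x), Γ ∩ B_r(x)) ≤ C·α(x,r). -/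
/-!
Planes through `x` of dimension `n` are parametrized by orthonormal `n`-frames, a compact set on
which the `β`-functional is Lipschitz, so a plane `Γ_β` realizing `β(x,r)` exists. Let `Γ_α` be a
plane with `r⁻¹ d_H(S ∩ B_r(x), Γ_α ∩ B_r(x)) < t` for some `t` slightly above `α(x,r)`, and put
`a = t r`. Then `S ∩ B_r(x)` lies within `β r ≤ a` of `Γ_β`, and `Γ_α ∩ B_r(x)` within `a` of
`S ∩ B_r(x)`, so by homogeneity every vector of the direction of `Γ_α` is `(4a/r)`-close to the
direction of `Γ_β`. The two directions have the same dimension, so the orthogonal projection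
between them is onto and the converse closeness holds as well. Pulling points radially back into
`B_r(x)` then gives `d_H(S ∩ B_r(x), Γ_β ∩ B_r(x)) ≤ 25 a`.
-/

open Metric Set

noncomputable section

section MetricSpace

variable {α : Type*} [PseudoMetricSpace α]

theorem infDist_le_add_of_forall_infDist_le {A T : Set α} {z : α} {a b : ℝ} (hA : A.Nonempty)
    (hz : infDist z A ≤ a) (hAT : ∀ y ∈ A, infDist y T ≤ b) : infDist z T ≤ a + b := by
  refine le_of_forall_pos_lt_add fun ε hε => ?_
  obtain ⟨y, hy, hzy⟩ := (infDist_lt_iff hA).1 (hz.trans_lt (lt_add_of_pos_right a hε))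
  linarith [infDist_le_infDist_add_dist (x := z) (y := y) (s := T), hAT y hy]

theorem hausdorffEDist_inter_ball_ne_top {s t : Set α} {x : α} {r : ℝ} (hs : x ∈ s) (ht : x ∈ t)
    (hr : 0 < r) : hausdorffEDist (s ∩ ball x r) (t ∩ ball x r) ≠ ⊤ :=
  hausdorffEDist_ne_top_of_nonempty_of_bounded ⟨x, hs, mem_ball_self hr⟩ ⟨x, ht, mem_ball_self hr⟩
    (isBounded_ball.subset inter_subset_right) (isBounded_ball.subset inter_subset_right)

end MetricSpace

section NormedSpace

variable {F : Type*} [NormedAddCommGroup F] [NormedSpace ℝ F]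

/-- The witness is the point of the segment `[x, p]` at distance `r - δ` from `x`. -/
theorem infDist_inter_ball_le_of_dist_le {s : Set F} (hs : Convex ℝ s) {x p : F} (hx : x ∈ s)
    (hp : p ∈ s) {r δ : ℝ} (hδ : 0 < δ) (hδr : δ ≤ r) (hpx : dist p x ≤ r + δ) :
    infDist p (s ∩ ball x r) ≤ 2 * δ := by
  by_cases hpr : dist p x < r
  · rw [infDist_zero_of_mem (show p ∈ s ∩ ball x r from ⟨hp, hpr⟩)]; positivity
  replace hpr := not_lt.1 hpr
  have hpx0 : 0 < dist x p := by rw [dist_comm]; linarith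
  set c := (r - δ) / dist x p
  have hc0 : 0 ≤ c := div_nonneg (by linarith) hpx0.le
  have hc1 : c ≤ 1 := (div_le_one hpx0).2 (by rw [dist_comm]; linarith)
  have hcx : c * dist x p = r - δ := div_mul_cancel₀ _ hpx0.ne'
  have hq : AffineMap.lineMap x p c ∈ s ∩ ball x r := by
    refine ⟨hs.lineMap_mem hx hp ⟨hc0, hc1⟩, ?_⟩
    rw [mem_ball, dist_lineMap_left, Real.norm_of_nonneg hc0, hcx]
    linarith
  calc infDist p (s ∩ ball x r) ≤ dist p (AffineMap.lineMap x p c) := infDist_le_dist_of_mem hq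
    _ = (1 - c) * dist x p := by
      rw [dist_comm, dist_lineMap_right, Real.norm_of_nonneg (by linarith)]
    _ ≤ 2 * δ := by rw [dist_comm] at hpx; nlinarith

theorem infDist_inter_ball_le_of_infDist_le [ProperSpace F] {s : Set F} (hs : Convex ℝ s)
    (hsc : IsClosed s) {x y : F} (hx : x ∈ s) {r a : ℝ} (ha : 0 < a) (har : a ≤ r)
    (hy : y ∈ ball x r) (hys : infDist y s ≤ a) : infDist y (s ∩ ball x r) ≤ 3 * a := by
  obtain ⟨p, hp, hyp⟩ := hsc.exists_infDist_eq_dist ⟨x, hx⟩ y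
  have hpx : dist p x ≤ r + a := by
    linarith [dist_triangle p y x, dist_comm p y, (mem_ball.1 hy).le]
  linarith [infDist_le_infDist_add_dist (x := y) (y := p) (s := s ∩ ball x r),
    infDist_inter_ball_le_of_dist_le hs hx hp ha har hpx]

end NormedSpace

section InnerProductSpace

variable {E : Type*} [NormedAddCommGroup E] [InnerProductSpace ℝ E]

theorem AffineSubspace.infDist_eq_infDist_sub_direction {Γ : AffineSubspace ℝ E} {x : E}
    (hx : x ∈ Γ) (y : E) : infDist y Γ = infDist (y - x) Γ.direction := by
  rw [AffineSubspace.coe_direction_eq_vsub_set_right hx]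
  exact (infDist_image (IsometryEquiv.subRight x).isometry).symm

theorem Submodule.infDist_eq_norm_sub_starProjection (W : Submodule ℝ E)
    [W.HasOrthogonalProjection] (u : E) : infDist u W = ‖u - W.starProjection u‖ := by
  rw [W.starProjection_minimal, infDist_eq_iInf]
  simp only [dist_eq_norm]
  rfl

theorem Submodule.infDist_smul (W : Submodule ℝ E) [W.HasOrthogonalProjection] (c : ℝ) (u : E) :
    infDist (c • u) W = |c| * infDist u W := by
  rw [W.infDist_eq_norm_sub_starProjection, W.infDist_eq_norm_sub_starProjection, map_smul,
    ← smul_sub, norm_smul, Real.norm_eq_abs]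

theorem Submodule.infDist_le_mul_norm_of_forall_norm_lt {V W : Submodule ℝ E}
    [W.HasOrthogonalProjection] {r b : ℝ} (hr : 0 < r)
    (h : ∀ v ∈ V, ‖v‖ < r → infDist v W ≤ b) {v : E} (hv : v ∈ V) :
    infDist v W ≤ 2 * b / r * ‖v‖ := by
  rcases eq_or_ne v 0 with rfl | hv0
  · simp [infDist_zero_of_mem W.zero_mem]
  have hv0 : 0 < ‖v‖ := norm_pos_iff.2 hv0
  set c := r / (2 * ‖v‖) with hc_def
  have hc : 0 < c := by positivity
  have hcv : ‖c • v‖ = r / 2 := by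
    rw [norm_smul, Real.norm_of_nonneg hc.le, hc_def]; field_simp
  have := h (c • v) (V.smul_mem c hv) (by rw [hcv]; linarith)
  rw [W.infDist_smul, abs_of_pos hc, ← le_div_iff₀' hc] at this
  calc infDist v W ≤ b / c := this
    _ = 2 * b / r * ‖v‖ := by rw [hc_def]; field_simp

/-- The orthogonal projection `V → W` is injective, hence onto as the dimensions agree. -/
theorem Submodule.exists_mem_norm_sub_le_of_infDist_le [FiniteDimensional ℝ E]
    {V W : Submodule ℝ E} (hVW : Module.finrank ℝ V = Module.finrank ℝ W) {η : ℝ} (hη0 : 0 ≤ η)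
    (hη1 : η < 1) (h : ∀ v ∈ V, infDist v W ≤ η * ‖v‖) {w : E} (hw : w ∈ W) :
    ∃ v ∈ V, ‖w - v‖ ≤ η / (1 - η) * ‖w‖ := by
  let L : V →ₗ[ℝ] W := W.orthogonalProjectionOnto.toLinearMap ∘ₗ V.subtype
  have hL : ∀ v : V, ((L v : W) : E) = W.starProjection v := fun _ => rfl
  have hclose : ∀ v : V, ‖(v : E) - L v‖ ≤ η * ‖(v : E)‖ := fun v => by
    rw [hL, ← W.infDist_eq_norm_sub_starProjection]; exact h v v.2
  have hinj : Function.Injective L := by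
    refine (injective_iff_map_eq_zero L).2 fun v hv => ?_
    have := hclose v
    rw [hv, ZeroMemClass.coe_zero, sub_zero] at this
    exact Subtype.ext (norm_le_zero_iff.1 (by nlinarith [norm_nonneg (v : E)]))
  obtain ⟨v, hv⟩ := (LinearMap.injective_iff_surjective_of_finrank_eq_finrank hVW).1 hinj ⟨w, hw⟩
  have hvw : ‖(v : E) - w‖ ≤ η * ‖(v : E)‖ := by simpa [hv] using hclose v
  have hv_le : ‖(v : E)‖ * (1 - η) ≤ ‖w‖ := by
    linarith [norm_le_norm_add_norm_sub' (v : E) w]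
  refine ⟨v, v.2, ?_⟩
  rw [norm_sub_rev, div_mul_eq_mul_div, le_div_iff₀ (by linarith)]
  nlinarith

theorem Orthonormal.exists_of_le_finrank [FiniteDimensional ℝ E] {n : ℕ}
    (hn : n ≤ Module.finrank ℝ E) : ∃ f : Fin n → E, Orthonormal ℝ f :=
  ⟨stdOrthonormalBasis ℝ E ∘ Fin.castLE hn,
    (stdOrthonormalBasis ℝ E).orthonormal.comp _ (Fin.castLE_injective hn)⟩

theorem Submodule.exists_orthonormal_span_eq [FiniteDimensional ℝ E] (W : Submodule ℝ E) {n : ℕ}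
    (hW : Module.finrank ℝ W = n) :
    ∃ f : Fin n → E, Orthonormal ℝ f ∧ Submodule.span ℝ (range f) = W := by
  let b := (stdOrthonormalBasis ℝ W).reindex (finCongr hW)
  refine ⟨W.subtype ∘ b, b.orthonormal.comp_linearIsometry W.subtypeₗᵢ, ?_⟩
  rw [range_comp, Submodule.span_image, ← b.coe_toBasis, b.toBasis.span_eq, Submodule.map_top,
    Submodule.range_subtype]

theorem isCompact_setOf_orthonormal [ProperSpace E] (ι : Type*) [Fintype ι] :
    IsCompact {f : ι → E | Orthonormal ℝ f} := by
  classical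
  refine isCompact_of_isClosed_isBounded ?_ ((isBounded_closedBall (x := 0) (r := 1)).subset ?_)
  · simp only [orthonormal_iff_ite, ofPred_forall]
    exact isClosed_iInter fun i => isClosed_iInter fun j =>
      isClosed_eq (by fun_prop) continuous_const
  · intro f hf
    rw [mem_closedBall, dist_zero_right, pi_norm_le_iff_of_nonneg zero_le_one]
    exact fun i => (hf.1 i).le

/-- Transport the coefficients of the projection of `u` onto the span of `g` to the frame `f`. -/
theorem Orthonormal.infDist_span_le {ι : Type*} [Fintype ι] {f g : ι → E}
    (hg : Orthonormal ℝ g) (u : E) :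
    infDist u (Submodule.span ℝ (range f)) ≤
      infDist u (Submodule.span ℝ (range g)) + ‖u‖ * ∑ i, ‖f i - g i‖ := by
  set G := Submodule.span ℝ (range g)
  have : FiniteDimensional ℝ G := FiniteDimensional.span_of_finite ℝ (finite_range g)
  obtain ⟨c, hc⟩ := (Submodule.mem_span_range_iff_exists_fun ℝ).1 (G.starProjection_apply_mem u)
  have hc_le : ∀ i, |c i| ≤ ‖u‖ := fun i => by
    calc |c i| = |inner ℝ (g i) (G.starProjection u)| := by rw [← hc, hg.inner_right_fintype]
      _ ≤ ‖g i‖ * ‖G.starProjection u‖ := abs_real_inner_le_norm _ _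
      _ ≤ ‖u‖ := by rw [hg.1 i, one_mul]; exact G.norm_starProjection_apply_le u
  have hmem : ∑ i, c i • f i ∈ Submodule.span ℝ (range f) :=
    (Submodule.mem_span_range_iff_exists_fun ℝ).2 ⟨c, rfl⟩
  calc infDist u (Submodule.span ℝ (range f))
      ≤ ‖(u - G.starProjection u) + ∑ i, c i • (g i - f i)‖ := by
        refine (infDist_le_dist_of_mem hmem).trans_eq ?_
        simp only [dist_eq_norm, smul_sub, Finset.sum_sub_distrib, hc]
        abel_nf
    _ ≤ ‖u - G.starProjection u‖ + ∑ i, |c i| * ‖f i - g i‖ := by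
        refine (norm_add_le _ _).trans (add_le_add_right ((norm_sum_le _ _).trans ?_) _)
        simp only [norm_smul, Real.norm_eq_abs, norm_sub_rev (g _), le_refl]
    _ ≤ infDist u G + ‖u‖ * ∑ i, ‖f i - g i‖ := by
        rw [G.infDist_eq_norm_sub_starProjection, Finset.mul_sum]
        gcongr with i
        exact hc_le i

end InnerProductSpace

section Approximation

variable {E : Type*} [NormedAddCommGroup E] [InnerProductSpace ℝ E] [FiniteDimensional ℝ E]
  {A : Set E} {Γ Γ' : AffineSubspace ℝ E} {x : E} {r a : ℝ}

/-- Points of `Γ ∩ B_r(x)` are `2a`-close to `Γ'`; rescale. -/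
theorem infDist_direction_le_of_infDist_le (hx : x ∈ Γ) (hx' : x ∈ Γ') (hr : 0 < r)
    (hA : A.Nonempty) (hΓA : ∀ z ∈ (Γ : Set E) ∩ ball x r, infDist z A ≤ a)
    (hAΓ' : ∀ y ∈ A, infDist y Γ' ≤ a) {v : E} (hv : v ∈ Γ.direction) :
    infDist v Γ'.direction ≤ 4 * a / r * ‖v‖ := by
  refine (Submodule.infDist_le_mul_norm_of_forall_norm_lt (b := 2 * a) hr (fun u hu hur => ?_)
    hv).trans_eq (by ring)
  have hux : u + x ∈ (Γ : Set E) ∩ ball x r :=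
    ⟨AffineSubspace.vadd_mem_of_mem_direction hu hx, by simpa [dist_eq_norm] using hur⟩
  have := infDist_le_add_of_forall_infDist_le hA (hΓA _ hux) hAΓ'
  rw [AffineSubspace.infDist_eq_infDist_sub_direction hx', add_sub_cancel_right] at this
  linarith

theorem infDist_le_of_mem_inter_ball (hrk : Module.finrank ℝ Γ.direction =
    Module.finrank ℝ Γ'.direction) (hx : x ∈ Γ) (hx' : x ∈ Γ') (ha : 0 < a) (har : 8 * a ≤ r)
    (hA : A.Nonempty) (hΓA : ∀ z ∈ (Γ : Set E) ∩ ball x r, infDist z A ≤ a)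
    (hAΓ' : ∀ y ∈ A, infDist y Γ' ≤ a) {z : E} (hz : z ∈ (Γ' : Set E) ∩ ball x r) :
    infDist z A ≤ 25 * a := by
  have hr : 0 < r := by linarith
  have hzx : ‖z - x‖ < r := by simpa [dist_eq_norm] using hz.2
  obtain ⟨v, hv, hzv⟩ := Submodule.exists_mem_norm_sub_le_of_infDist_le hrk (by positivity)
    (by rw [div_lt_one hr]; linarith)
    (fun v hv => infDist_direction_le_of_infDist_le hx hx' hr hA hΓA hAΓ' hv)
    (AffineSubspace.vsub_mem_direction hz.1 hx')
  have hzv8 : ‖z - x - v‖ ≤ 8 * a := by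
    have hη : 4 * a / r / (1 - 4 * a / r) = 4 * a / (r - 4 * a) := by
      field_simp
    rw [vsub_eq_sub, hη] at hzv
    refine hzv.trans ?_
    rw [div_mul_eq_mul_div, div_le_iff₀ (by linarith)]
    nlinarith
  have hvΓ : v + x ∈ Γ := AffineSubspace.vadd_mem_of_mem_direction hv hx
  have hdist : dist z (v + x) ≤ 8 * a := by rwa [dist_eq_norm, sub_add_eq_sub_sub_swap]
  have hvx : dist (v + x) x ≤ r + 8 * a := by
    rw [dist_eq_norm, add_sub_cancel_right]
    linarith [norm_le_norm_add_norm_sub' v (z - x), norm_sub_rev v (z - x)]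
  have hvB : infDist (v + x) ((Γ : Set E) ∩ ball x r) ≤ 2 * (8 * a) :=
    infDist_inter_ball_le_of_dist_le Γ.convex hx hvΓ (by positivity) har hvx
  have hΓB : ((Γ : Set E) ∩ ball x r).Nonempty := ⟨x, hx, mem_ball_self hr⟩
  have hvA := infDist_le_add_of_forall_infDist_le hΓB hvB hΓA
  linarith [infDist_le_infDist_add_dist (x := z) (y := v + x) (s := A)]

theorem hausdorffDist_inter_ball_le (hrk : Module.finrank ℝ Γ.direction =
    Module.finrank ℝ Γ'.direction) (hx : x ∈ Γ) (hx' : x ∈ Γ') (ha : 0 < a) (har : 8 * a ≤ r)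
    (hA : A.Nonempty) (hAB : A ⊆ ball x r) (hΓA : ∀ z ∈ (Γ : Set E) ∩ ball x r, infDist z A ≤ a)
    (hAΓ' : ∀ y ∈ A, infDist y Γ' ≤ a) :
    hausdorffDist A ((Γ' : Set E) ∩ ball x r) ≤ 25 * a := by
  refine hausdorffDist_le_of_infDist (by positivity) (fun y hy => ?_)
    (fun z hz => infDist_le_of_mem_inter_ball hrk hx hx' ha har hA hΓA hAΓ' hz)
  have := infDist_inter_ball_le_of_infDist_le Γ'.convex (Γ'.closed_of_finiteDimensional) hx' ha
    (by linarith) (hAB hy) (hAΓ' y hy)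
  linarith

end Approximation

section Euclidean

variable {d n : ℕ} {S : Set (EuclideanSpace ℝ (Fin d))}
  {Γ : AffineSubspace ℝ (EuclideanSpace ℝ (Fin d))} {x y : EuclideanSpace ℝ (Fin d)} {r : ℝ}

theorem planeSup_nonneg (hr : 0 ≤ r) : 0 ≤ planeSup S Γ x r :=
  mul_nonneg (inv_nonneg.2 hr) (Real.sSup_nonneg (by rintro _ ⟨y, -, rfl⟩; exact infDist_nonneg))

theorem planeHD_nonneg (hr : 0 ≤ r) : 0 ≤ planeHD S Γ x r :=
  mul_nonneg (inv_nonneg.2 hr) hausdorffDist_nonneg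

theorem infDist_le_mul_planeSup (hr : 0 < r) (hx : x ∈ Γ) (hy : y ∈ S ∩ ball x r) :
    infDist y Γ ≤ r * planeSup S Γ x r := by
  rw [planeSup, ← mul_assoc, mul_inv_cancel₀ hr.ne', one_mul]
  refine le_csSup ⟨r, ?_⟩ ⟨y, hy, rfl⟩
  rintro _ ⟨z, hz, rfl⟩
  exact (infDist_le_dist_of_mem hx).trans (mem_ball.1 hz.2).le

theorem planeSup_le_of_forall_infDist_le (hr : 0 < r) {t : ℝ} (ht : 0 ≤ t)
    (h : ∀ y ∈ S ∩ ball x r, infDist y Γ ≤ r * t) : planeSup S Γ x r ≤ t := by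
  rw [planeSup, inv_mul_le_iff₀ hr]
  exact Real.sSup_le (by rintro _ ⟨y, hy, rfl⟩; exact h y hy) (by positivity)

theorem infDist_plane_le_mul_planeHD (hr : 0 < r) (hxS : x ∈ S) (hx : x ∈ Γ)
    (hy : y ∈ S ∩ ball x r) : infDist y ((Γ : Set _) ∩ ball x r) ≤ r * planeHD S Γ x r := by
  rw [planeHD, ← mul_assoc, mul_inv_cancel₀ hr.ne', one_mul]
  exact infDist_le_hausdorffDist_of_mem hy (hausdorffEDist_inter_ball_ne_top hxS hx hr)

theorem infDist_set_le_mul_planeHD (hr : 0 < r) (hxS : x ∈ S) (hx : x ∈ Γ)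
    (hy : y ∈ (Γ : Set _) ∩ ball x r) : infDist y (S ∩ ball x r) ≤ r * planeHD S Γ x r := by
  rw [planeHD, ← mul_assoc, mul_inv_cancel₀ hr.ne', one_mul, hausdorffDist_comm]
  exact infDist_le_hausdorffDist_of_mem hy (hausdorffEDist_inter_ball_ne_top hx hxS hr)

theorem planeSup_le_planeHD (hr : 0 < r) (hxS : x ∈ S) (hx : x ∈ Γ) :
    planeSup S Γ x r ≤ planeHD S Γ x r := by
  refine planeSup_le_of_forall_infDist_le hr (planeHD_nonneg hr.le) fun y hy => ?_
  exact (infDist_le_infDist_of_subset inter_subset_left ⟨x, hx, mem_ball_self hr⟩).trans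
    (infDist_plane_le_mul_planeHD hr hxS hx hy)

theorem betaNum_le_planeSup (hr : 0 ≤ r) (hx : x ∈ Γ)
    (hΓ : Module.finrank ℝ Γ.direction = n) : betaNum n S x r ≤ planeSup S Γ x r :=
  csInf_le ⟨0, by rintro _ ⟨Γ', -, -, rfl⟩; exact planeSup_nonneg hr⟩ ⟨Γ, hx, hΓ, rfl⟩

theorem alphaNum_nonneg (hr : 0 ≤ r) : 0 ≤ alphaNum n S x r :=
  Real.sInf_nonneg (by rintro _ ⟨Γ, -, -, rfl⟩; exact planeHD_nonneg hr)

theorem planeSup_mk'_span_le {f g : Fin n → EuclideanSpace ℝ (Fin d)} (hg : Orthonormal ℝ g)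
    (hr : 0 < r) :
    planeSup S (AffineSubspace.mk' x (Submodule.span ℝ (range f))) x r ≤
      planeSup S (AffineSubspace.mk' x (Submodule.span ℝ (range g))) x r + ∑ i, ‖f i - g i‖ := by
  refine planeSup_le_of_forall_infDist_le hr
    (add_nonneg (planeSup_nonneg hr.le) (by positivity)) fun y hy => ?_
  have hyx : ‖y - x‖ ≤ r := by simpa [dist_eq_norm] using (mem_ball.1 hy.2).le
  have hg' := infDist_le_mul_planeSup (Γ := AffineSubspace.mk' x (Submodule.span ℝ (range g))) hr
    (AffineSubspace.self_mem_mk' x _) hy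
  rw [AffineSubspace.infDist_eq_infDist_sub_direction (AffineSubspace.self_mem_mk' x _),
    AffineSubspace.direction_mk'] at hg' ⊢
  calc _ ≤ _ := hg.infDist_span_le (y - x)
    _ ≤ _ := add_le_add hg' (mul_le_mul_of_nonneg_right hyx (by positivity))
    _ = _ := by ring

theorem exists_planeSup_eq_betaNum (hnd : n ≤ d) (S : Set (EuclideanSpace ℝ (Fin d)))
    (x : EuclideanSpace ℝ (Fin d)) (hr : 0 < r) :
    ∃ Γ : AffineSubspace ℝ (EuclideanSpace ℝ (Fin d)), x ∈ Γ ∧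
      Module.finrank ℝ Γ.direction = n ∧ planeSup S Γ x r = betaNum n S x r := by
  set F := fun f : Fin n → EuclideanSpace ℝ (Fin d) =>
    planeSup S (AffineSubspace.mk' x (Submodule.span ℝ (range f))) x r
  have hF : LipschitzOnWith n F {f | Orthonormal ℝ f} := by
    refine LipschitzOnWith.of_le_add_mul _ fun f _ g hg => (planeSup_mk'_span_le hg hr).trans ?_
    have : ∑ i, ‖f i - g i‖ ≤ ∑ _i : Fin n, dist f g :=
      Finset.sum_le_sum fun i _ => by rw [← dist_eq_norm]; exact dist_le_pi_dist f g i
    exact add_le_add le_rfl (by simpa using this)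
  obtain ⟨f₀, hf₀, hmin⟩ := (isCompact_setOf_orthonormal (Fin n)).exists_isMinOn
    (Orthonormal.exists_of_le_finrank (by simpa using hnd)) hF.continuousOn
  have hrank :
      Module.finrank ℝ (AffineSubspace.mk' x (Submodule.span ℝ (range f₀))).direction = n := by
    rw [AffineSubspace.direction_mk', finrank_span_eq_card hf₀.linearIndependent, Fintype.card_fin]
  refine ⟨_, AffineSubspace.self_mem_mk' x _, hrank, .symm (IsLeast.csInf_eq ?_)⟩
  refine ⟨⟨_, AffineSubspace.self_mem_mk' x _, hrank, rfl⟩, ?_⟩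
  rintro _ ⟨Γ, hx, hΓ, rfl⟩
  obtain ⟨f, hf, hspan⟩ := Γ.direction.exists_orthonormal_span_eq hΓ
  simpa [F, hspan, AffineSubspace.mk'_eq hx] using hmin hf

theorem planeHD_le_of_planeSup_eq_betaNum (hxS : x ∈ S) (hr : 0 < r)
    (hα : alphaNum n S x r < 1 / 8) (hx : x ∈ Γ) (hΓ : Module.finrank ℝ Γ.direction = n)
    (hβ : planeSup S Γ x r = betaNum n S x r) : planeHD S Γ x r ≤ 25 * alphaNum n S x r := by
  have hHD : ∀ t, alphaNum n S x r < t → t < 1 / 8 → planeHD S Γ x r ≤ 25 * t := by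
    intro t hαt ht
    rw [alphaNum] at hαt
    obtain ⟨_, ⟨Γ', hx', hΓ', rfl⟩, hΓ't⟩ :=
      exists_lt_of_csInf_lt (by exact ⟨_, Γ, hx, hΓ, rfl⟩) hαt
    have hΓ'A : ∀ z ∈ (Γ' : Set _) ∩ ball x r, infDist z (S ∩ ball x r) ≤ r * t := fun z hz =>
      (infDist_set_le_mul_planeHD hr hxS hx' hz).trans (by gcongr)
    have hAΓ : ∀ y ∈ S ∩ ball x r, infDist y Γ ≤ r * t := fun y hy =>
      calc infDist y Γ ≤ r * planeSup S Γ x r := infDist_le_mul_planeSup hr hx hy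
        _ ≤ r * planeHD S Γ' x r := by
          rw [hβ]; gcongr
          exact (betaNum_le_planeSup hr.le hx' hΓ').trans (planeSup_le_planeHD hr hxS hx')
        _ ≤ r * t := by gcongr
    have := hausdorffDist_inter_ball_le (A := S ∩ ball x r) (hΓ'.trans hΓ.symm) hx' hx
      (mul_pos hr ((alphaNum_nonneg hr.le).trans_lt hαt)) (by nlinarith)
      ⟨x, hxS, mem_ball_self hr⟩ inter_subset_right hΓ'A hAΓ
    rw [planeHD, inv_mul_le_iff₀ hr]
    linarith
  by_contra! h
  obtain ⟨t, hαt, ht⟩ := exists_between (lt_min (by linarith : alphaNum n S x r <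
    planeHD S Γ x r / 25) hα)
  linarith [hHD t hαt (ht.trans_le (min_le_right _ _)), ht.trans_le (min_le_left _ _)]

end Euclidean

theorem stmt10 (n : ℕ) :
    ∃ C : ℝ, 1 ≤ C ∧
      ∀ (d : ℕ) (S : Set (EuclideanSpace ℝ (Fin d))) (x : EuclideanSpace ℝ (Fin d)) (r : ℝ),
        n < d → x ∈ S → 0 < r → alphaNum n S x r ≤ 1 / 100 →
        ∃ Γ : AffineSubspace ℝ (EuclideanSpace ℝ (Fin d)),
          x ∈ Γ ∧ Module.finrank ℝ Γ.direction = n ∧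
            planeSup S Γ x r = betaNum n S x r ∧
            planeHD S Γ x r ≤ C * alphaNum n S x r := by
  refine ⟨25, by norm_num, fun d S x r hnd hxS hr hα => ?_⟩
  obtain ⟨Γ, hx, hΓ, hβ⟩ := exists_planeSup_eq_betaNum hnd.le S x hr
  exact ⟨Γ, hx, hΓ, hβ, planeHD_le_of_planeSup_eq_betaNum hxS hr (by linarith) hx hΓ hβ⟩

end
end
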